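/- Let k be a field of characteristic 0 with algebraic closure k̄, let n ≥ 6, and let F, G be quadratic forms in n + 1 variables over k with rank(F) = n + 1. Then the set {λ ∈ k̄ : rank(F + λG) ≤ 4} has at most two elements, and if it has exactly two elements then n = 6 or n = 7. -/

import Mathlib

noncomputable section

open Matrix NumberField IsDedekindDomain MvPolynomial

/-! ### Quadratic forms via Gram matrices -/

section Forms

variable {R : Type*} [CommRing R] {m : ℕ}

/-- The quadratic form with (symmetric) Gram matrix `A`, evaluated at `x`. -/
def Qeval (A : Matrix (Fin m) (Fin m) R) (x : Fin m → R) : R := x ⬝ᵥ (A *ᵥ x)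

/-- The `2 × m` Jacobian matrix of the pair of quadratic forms with Gram matrices `A` and `B`
at a point `x`: the rows are the gradients `2 • (A *ᵥ x)` and `2 • (B *ᵥ x)`. -/
def Jac (A B : Matrix (Fin m) (Fin m) R) (x : Fin m → R) : Matrix (Fin 2) (Fin m) R :=
  Matrix.of ![(2 : R) • (A *ᵥ x), (2 : R) • (B *ᵥ x)]

/-- `x` is a point of the projective variety `{F = G = 0}`: it is nonzero and both quadratic
forms vanish on it. -/
def IsPt (A B : Matrix (Fin m) (Fin m) R) (x : Fin m → R) : Prop :=
  x ≠ 0 ∧ Qeval A x = 0 ∧ Qeval B x = 0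

/-- `x` is a smooth point of the variety `{F = G = 0}`: it is a point and the Jacobian matrix
of `(F, G)` at `x` has rank `2`. -/
def IsSmoothPt (A B : Matrix (Fin m) (Fin m) R) (x : Fin m → R) : Prop :=
  IsPt A B x ∧ (Jac A B x).rank = 2

/-- The homogeneous quadratic polynomial attached to the Gram matrix `A`. -/
def grampoly (A : Matrix (Fin m) (Fin m) R) : MvPolynomial (Fin m) R :=
  ∑ i, ∑ j, MvPolynomial.C (A i j) * (MvPolynomial.X i * MvPolynomial.X j)

/-- Base change of a Gram matrix along an algebra map. -/
def bc {k : Type*} [CommSemiring k] (K : Type*) [CommSemiring K] [Algebra k K]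
    {n₁ n₂ : ℕ} (A : Matrix (Fin n₁) (Fin n₂) k) : Matrix (Fin n₁) (Fin n₂) K :=
  A.map (algebraMap k K)

/-- The top-left `3 × 3` block of a Gram matrix: the Gram matrix of the restriction
`F(x₀, x₁, x₂, 0, …, 0)` of the quadratic form to the plane `x₃ = ⋯ = 0`. -/
def topLeft (h : 3 ≤ m) (A : Matrix (Fin m) (Fin m) R) : Matrix (Fin 3) (Fin 3) R :=
  A.submatrix (Fin.castLE h) (Fin.castLE h)

/-- The discriminant polynomial `P(λ) = det(F + λ G)` of a pencil of quadratic forms. -/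
def discpoly (A B : Matrix (Fin m) (Fin m) R) : Polynomial R :=
  ((A.map Polynomial.C) + (Polynomial.X : Polynomial R) • (B.map Polynomial.C)).det

/-- The linear form `c₃ x₃ + c₄ x₄ + c₅ x₅` (as a covector in `R^6`) cutting out a hyperplane
of `ℙ⁵` containing the plane `Π : x₃ = x₄ = x₅ = 0`. -/
def lvec (c : Fin 3 → R) : Fin 6 → R := ![0, 0, 0, c 0, c 1, c 2]

end Forms

/-! ### Geometric properties of the intersection of two quadrics -/

section Geometry

variable {k : Type*} [Field k] {m : ℕ} (kb : Type*) [Field kb] [Algebra k kb]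

/-- The variety `X ⊂ ℙ^{m-1}` defined by the two quadratic forms with Gram matrices `A`, `B`
is geometrically integral: over an algebraic closure `kb` of `k`, the ideal generated by the
two quadratic polynomials is prime.  (For an intersection of two linearly independent quadrics
this is equivalent to integrality of the scheme `X ×_k k̄`.) -/
def GeomIntegral (A B : Matrix (Fin m) (Fin m) k) : Prop :=
  (Ideal.span {grampoly (bc kb A), grampoly (bc kb B)}).IsPrime

/-- Every irreducible component of `X ×_k k̄` has dimension `m - 3` (i.e. codimension `2` in
`ℙ^{m-1}`), expressed by saying that the affine cone over `X ×_k k̄` has Krull dimension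
`m - 2`. -/
def PureCodimTwo (A B : Matrix (Fin m) (Fin m) k) : Prop :=
  ringKrullDim (MvPolynomial (Fin m) kb ⧸
    (Ideal.span {grampoly (bc kb A), grampoly (bc kb B)})) = (m - 2 : ℕ)

/-- `X` is non-conical: there is no point `p ∈ ℙ^{m-1}(k̄)` such that every line through `p`
and a point of `X(k̄)` is contained in `X(k̄)`. -/
def NonConical (A B : Matrix (Fin m) (Fin m) k) : Prop :=
  ¬ ∃ p : Fin m → kb, p ≠ 0 ∧ ∀ x : Fin m → kb,
      IsPt (bc kb A) (bc kb B) x →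
      ∀ s t : kb, Qeval (bc kb A) (s • p + t • x) = 0 ∧ Qeval (bc kb B) (s • p + t • x) = 0

/-- `X` contains a conic defined over `k`: there is a `2`-plane `Π ⊂ ℙ^{m-1}_k`, given as the
projectivization of the image of an injective linear map `ι : k³ → k^m`, such that the
restrictions of `F` and `G` to `Π` span a line in the space of ternary quadratic forms;
i.e. `X ∩ Π` is the plane curve of degree `2` defined by a single nonzero ternary quadratic
form `q`. -/
def ContainsConic (A B : Matrix (Fin m) (Fin m) k) : Prop :=
  ∃ ι : Matrix (Fin m) (Fin 3) k, ι.rank = 3 ∧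
    ∃ q : Matrix (Fin 3) (Fin 3) k, q.IsSymm ∧ q ≠ 0 ∧
      ∃ a b : k, ¬(a = 0 ∧ b = 0) ∧ ιᵀ * A * ι = a • q ∧ ιᵀ * B * ι = b • q

/-- `X` contains a smooth conic defined over `k`: as in `ContainsConic`, with the ternary
quadratic form `q` moreover of rank `3`, so that `X ∩ Π` is a smooth geometrically integral
plane curve of degree `2`. -/
def ContainsSmoothConic (A B : Matrix (Fin m) (Fin m) k) : Prop :=
  ∃ ι : Matrix (Fin m) (Fin 3) k, ι.rank = 3 ∧
    ∃ q : Matrix (Fin 3) (Fin 3) k, q.IsSymm ∧ q.rank = 3 ∧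
      ∃ a b : k, ¬(a = 0 ∧ b = 0) ∧ ιᵀ * A * ι = a • q ∧ ιᵀ * B * ι = b • q

/-- `X = {F = G = 0}` is a smooth intersection of two quadrics: at every point of `X` over the
algebraic closure `kb`, the `2 × m` Jacobian matrix of `(F, G)` has rank `2`. -/
def IsSmoothIntersection (A B : Matrix (Fin m) (Fin m) k) : Prop :=
  ∀ x : Fin m → kb, IsPt (bc kb A) (bc kb B) x → (Jac (bc kb A) (bc kb B) x).rank = 2

/-- The hyperplane `H = {x | ℓ ⬝ᵥ x = 0}` meets `X = {F = G = 0}` transversally at the smooth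
point `P`: `P ∈ H` and `H` does not contain the projective tangent space of `X` at `P`,
i.e. `ℓ` is not a linear combination of the gradients of `F` and `G` at `P`
(the rows of the Jacobian). -/
def TransversalAt {K : Type*} [Field K] (A B : Matrix (Fin m) (Fin m) K) (P ℓ : Fin m → K) :
    Prop :=
  ℓ ⬝ᵥ P = 0 ∧ ℓ ∉ Submodule.span K {(2 : K) • (A *ᵥ P), (2 : K) • (B *ᵥ P)}

end Geometry

/-! ### Places of a number field and their completions -/

/-- The places of a number field `k`: the infinite (archimedean) places together with the
finite places, i.e. the nonzero prime ideals of the ring of integers of `k`. -/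
inductive Place (k : Type*) [Field k] [NumberField k] where
  | infinite : NumberField.InfinitePlace k → Place k
  | finite : IsDedekindDomain.HeightOneSpectrum (𝓞 k) → Place k

variable {k : Type*} [Field k] [NumberField k]

/-- The completion `k_v` of a number field `k` at a place `v`. -/
def Place.Completion : Place k → Type _
  | .infinite v => v.1.Completion
  | .finite v => v.adicCompletion k

instance : (v : Place k) → Field v.Completion
  | .infinite v => inferInstanceAs (Field v.1.Completion)
  | .finite v => inferInstanceAs (Field (v.adicCompletion k))

instance : (v : Place k) → Algebra k v.Completion
  | .infinite v => inferInstanceAs (Algebra k v.1.Completion)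
  | .finite v => inferInstanceAs (Algebra k (v.adicCompletion k))

instance : (v : Place k) → TopologicalSpace v.Completion
  | .infinite v => inferInstanceAs (TopologicalSpace v.1.Completion)
  | .finite v => inferInstanceAs (TopologicalSpace (v.adicCompletion k))

section Local

variable {m : ℕ}

/-- `X` has a smooth `k_v`-point at every place `v` of `k`. -/
def SmoothPointsEverywhereLocally (A B : Matrix (Fin m) (Fin m) k) : Prop :=
  ∀ v : Place k, ∃ x : Fin m → v.Completion, IsSmoothPt (bc v.Completion A) (bc v.Completion B) x

/-- `X` has a `k_v`-point at every place `v` of `k`. -/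
def PointsEverywhereLocally (A B : Matrix (Fin m) (Fin m) k) : Prop :=
  ∀ v : Place k, ∃ x : Fin m → v.Completion, IsPt (bc v.Completion A) (bc v.Completion B) x

/-- Weak approximation for smooth points:  the set of smooth `k`-points of `X` is dense in
`∏_{v ∈ S} X_sm(k_v)` for every finite set `S` of places, where each `X_sm(k_v)` carries the
quotient of the `v`-adic topology on `k_v^m \ {0}`.  Equivalently (as the quotient maps by
scaling are open): for every choice of smooth `k_v`-points `x_v` and open neighbourhoods `U_v`
of `x_v` in `k_v^m`, there is a smooth `k`-point `y` which, after scaling by some nonzero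
`c_v ∈ k_v`, lies in `U_v` for each `v ∈ S`. -/
def SmoothWeakApproximation (A B : Matrix (Fin m) (Fin m) k) : Prop :=
  ∀ S : Finset (Place k),
  ∀ x : (v : Place k) → v ∈ S → (Fin m → v.Completion),
    (∀ v hv, IsSmoothPt (bc v.Completion A) (bc v.Completion B) (x v hv)) →
  ∀ U : (v : Place k) → v ∈ S → Set (Fin m → v.Completion),
    (∀ v hv, IsOpen (U v hv)) → (∀ v hv, x v hv ∈ U v hv) →
  ∃ y : Fin m → k, IsSmoothPt A B y ∧
    ∀ v hv, ∃ c : v.Completion, c ≠ 0 ∧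
      (c • fun i => algebraMap k v.Completion (y i)) ∈ U v hv

/-- Weak approximation:  the set of `k`-points of `X` is dense in `∏_{v ∈ S} X(k_v)` for every
finite set `S` of places of `k` (topologies as in `SmoothWeakApproximation`). -/
def WeakApproximation (A B : Matrix (Fin m) (Fin m) k) : Prop :=
  ∀ S : Finset (Place k),
  ∀ x : (v : Place k) → v ∈ S → (Fin m → v.Completion),
    (∀ v hv, IsPt (bc v.Completion A) (bc v.Completion B) (x v hv)) →
  ∀ U : (v : Place k) → v ∈ S → Set (Fin m → v.Completion),
    (∀ v hv, IsOpen (U v hv)) → (∀ v hv, x v hv ∈ U v hv) →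
  ∃ y : Fin m → k, IsPt A B y ∧
    ∀ v hv, ∃ c : v.Completion, c ≠ 0 ∧
      (c • fun i => algebraMap k v.Completion (y i)) ∈ U v hv

end Local

/-! Let `P(λ) = det(F + λG)`. It has degree at most `n + 1`, and `P(0) = det F ≠ 0`. If
`F + λ₀G` has rank `r`, write `F + λ₀G = V⁻¹ diag(1ᵣ, 0) U⁻¹`; then
`V (F + (λ₀ + t)G) U = diag(1ᵣ, 0) + t · VGU`, whose last `n + 1 - r` rows are divisible by `t`,
so `(λ - λ₀)^(n + 1 - r)` divides `P`. Hence every `λ₀` with `rank(F + λ₀G) ≤ 4` is a root of `P`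
of multiplicity at least `n - 3`, and `s` such roots give `s (n - 3) ≤ n + 1`. For `n ≥ 6` this
forces `s ≤ 2`, and `s = 2` forces `n ≤ 7`. -/

namespace Polynomial

section CommRing

variable {R : Type*} [CommRing R] {m : ℕ}

theorem discpoly_eq_det_X_smul_add (A B : Matrix (Fin m) (Fin m) R) :
    discpoly A B = ((X : R[X]) • B.map C + A.map C).det := by
  rw [discpoly, add_comm]

theorem natDegree_discpoly_le (A B : Matrix (Fin m) (Fin m) R) :
    (discpoly A B).natDegree ≤ m := by
  simpa [discpoly_eq_det_X_smul_add] using natDegree_det_X_add_C_le B A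

theorem coeff_discpoly_zero (A B : Matrix (Fin m) (Fin m) R) :
    (discpoly A B).coeff 0 = A.det := by
  rw [discpoly_eq_det_X_smul_add, coeff_det_X_add_C_zero]

theorem discpoly_ne_zero {A : Matrix (Fin m) (Fin m) R} (hA : A.det ≠ 0)
    (B : Matrix (Fin m) (Fin m) R) : discpoly A B ≠ 0 :=
  fun h ↦ hA (by rw [← coeff_discpoly_zero A B, h, coeff_zero])

theorem discpoly_comp_X_add_C (A B : Matrix (Fin m) (Fin m) R) (l : R) :
    (discpoly A B).comp (X + C l) = discpoly (A + l • B) B := by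
  rw [discpoly, ← coe_compRingHom_apply, RingHom.map_det, discpoly]
  congr 1
  refine Matrix.ext fun i j ↦ ?_
  simp only [RingHom.mapMatrix_apply, Matrix.map_apply, Matrix.add_apply, Matrix.smul_apply,
    smul_eq_mul, coe_compRingHom_apply, add_comp, mul_comp, C_comp, X_comp, C_add, C_mul]
  ring

theorem X_pow_card_dvd_det_fromBlocks {ι₁ ι₂ : Type*} [Fintype ι₁] [Fintype ι₂]
    [DecidableEq ι₁] [DecidableEq ι₂] (N : Matrix (ι₁ ⊕ ι₂) (ι₁ ⊕ ι₂) R) :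
    (X : R[X]) ^ Fintype.card ι₂ ∣
      ((Matrix.fromBlocks 1 0 0 0 : Matrix (ι₁ ⊕ ι₂) (ι₁ ⊕ ι₂) R).map C +
        (X : R[X]) • N.map C).det := by
  set W : Matrix (ι₁ ⊕ ι₂) (ι₁ ⊕ ι₂) R[X] := Matrix.of fun i j ↦
    Sum.elim (fun i ↦ (if Sum.inl i = j then 1 else 0) + X * C (N (Sum.inl i) j))
      (fun i ↦ C (N (Sum.inr i) j)) i
  have hW : (Matrix.fromBlocks 1 0 0 0 : Matrix (ι₁ ⊕ ι₂) (ι₁ ⊕ ι₂) R).map C +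
      (X : R[X]) • N.map C = Matrix.diagonal (Sum.elim 1 fun _ ↦ X) * W := by
    refine Matrix.ext fun i j ↦ ?_
    rcases i with i | i <;> rcases j with j | j <;> simp [W, Matrix.one_apply, apply_ite C]
  rw [hW, Matrix.det_mul, Matrix.det_diagonal, Fintype.prod_sum_type]
  simp

theorem discpoly_mul_mul (V M N U : Matrix (Fin m) (Fin m) R) :
    discpoly (V * M * U) (V * N * U) = C (V.det * U.det) * discpoly M N := by
  have h : (V * M * U).map C + (X : R[X]) • (V * N * U).map C =
      V.map C * (M.map C + (X : R[X]) • N.map C) * U.map C := by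
    simp only [Matrix.map_mul, Matrix.mul_add, Matrix.add_mul, Matrix.mul_smul, Matrix.smul_mul]
  have hdet (P : Matrix (Fin m) (Fin m) R) : (P.map C).det = C P.det :=
    (RingHom.map_det C P).symm
  rw [discpoly, h, Matrix.det_mul, Matrix.det_mul, hdet, hdet, C_mul, discpoly]
  ring

end CommRing

section Field

variable {K : Type*} [Field K] {m : ℕ}

theorem X_pow_sub_rank_dvd_discpoly (M N : Matrix (Fin m) (Fin m) K) :
    (X : K[X]) ^ (m - M.rank) ∣ discpoly M N := by
  obtain ⟨V, U, e, hV, hU, hVMU⟩ := M.exists_rank_normal_form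
  have hunit : IsUnit (C (V.det * U.det)) := isUnit_C.mpr
    ((Matrix.isUnit_iff_isUnit_det V).mp hV |>.mul ((Matrix.isUnit_iff_isUnit_det U).mp hU))
  rw [← hunit.dvd_mul_left, ← discpoly_mul_mul, hVMU, discpoly,
    ← Matrix.det_submatrix_equiv_self e.symm]
  convert X_pow_card_dvd_det_fromBlocks ((V * N * U).submatrix e.symm e.symm) using 2
  · simp
  · ext i j : 1
    simp only [Matrix.submatrix_apply, Matrix.add_apply, Matrix.smul_apply, Matrix.map_apply,
      Equiv.apply_symm_apply]

theorem sub_rank_le_rootMultiplicity_discpoly {A : Matrix (Fin m) (Fin m) K}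
    (B : Matrix (Fin m) (Fin m) K) (hA : A.det ≠ 0) (l : K) :
    m - (A + l • B).rank ≤ (discpoly A B).rootMultiplicity l := by
  have hP : (discpoly A B).comp (X + C l) ≠ 0 :=
    comp_X_add_C_ne_zero_iff.mpr (discpoly_ne_zero hA B)
  rw [rootMultiplicity_eq_rootMultiplicity, le_rootMultiplicity_iff hP, C_0, sub_zero,
    discpoly_comp_X_add_C]
  exact X_pow_sub_rank_dvd_discpoly _ _

end Field

section IsDomain

variable {R : Type*} [CommRing R] [IsDomain R]

theorem encard_mul_le_natDegree_of_le_rootMultiplicity {P : R[X]} (hP : P ≠ 0) {S : Set R}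
    {c : ℕ} (hc : 0 < c) (hS : ∀ a ∈ S, c ≤ P.rootMultiplicity a) :
    S.encard * c ≤ P.natDegree := by
  classical
  have hfin : S.Finite := P.roots.toFinset.finite_toSet.subset fun a ha ↦ by
    simpa [hP] using (hc.trans_le (hS a ha))
  set t := hfin.toFinset
  have hle : c • t.val ≤ P.roots := Multiset.le_iff_count.mpr fun a ↦ by
    by_cases ha : a ∈ S
    · simpa [t, Multiset.count_eq_one_of_mem t.nodup (hfin.mem_toFinset.mpr ha)] using hS a ha
    · simp [t, ha]
  rw [hfin.encard_eq_coe_toFinset_card]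
  exact_mod_cast calc t.card * c = Multiset.card (c • t.val) := by simp [mul_comm]
    _ ≤ Multiset.card P.roots := Multiset.card_le_card hle
    _ ≤ P.natDegree := card_roots' P

end IsDomain

end Polynomial

theorem Matrix.isUnit_of_rank_eq_card {K ι : Type*} [Field K] [Fintype ι] [DecidableEq ι]
    {M : Matrix ι ι K} (h : M.rank = Fintype.card ι) : IsUnit M := by
  have hrange : LinearMap.range M.mulVecLin = ⊤ :=
    Submodule.eq_top_of_finrank_eq (by rw [Module.finrank_fintype_fun_eq_card]; exact h)
  exact M.mulVec_surjective_iff_isUnit.mp (LinearMap.range_eq_top.mp hrange)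

theorem statement_18_general (k : Type*) [Field k] (n : ℕ) (hn : 6 ≤ n)
    (A B : Matrix (Fin (n + 1)) (Fin (n + 1)) k)
    (hF : A.rank = n + 1) :
    {l : AlgebraicClosure k |
        (bc (AlgebraicClosure k) A + l • bc (AlgebraicClosure k) B).rank ≤ 4}.encard ≤ 2 ∧
      ({l : AlgebraicClosure k |
          (bc (AlgebraicClosure k) A + l • bc (AlgebraicClosure k) B).rank ≤ 4}.encard = 2 →
        n = 6 ∨ n = 7) := by
  set K := AlgebraicClosure k
  set S := {l : K | (bc K A + l • bc K B).rank ≤ 4}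
  have hdet : (bc K A).det ≠ 0 := by
    rw [bc, ← RingHom.mapMatrix_apply, ← RingHom.map_det]
    exact (map_ne_zero _).mpr ((Matrix.isUnit_iff_isUnit_det A).mp
      (Matrix.isUnit_of_rank_eq_card (by simpa using hF))).ne_zero
  have hmult : ∀ l ∈ S, n - 3 ≤ (discpoly (bc K A) (bc K B)).rootMultiplicity l :=
    fun l hl ↦ le_trans (by have : (bc K A + l • bc K B).rank ≤ 4 := hl; omega)
      (Polynomial.sub_rank_le_rootMultiplicity_discpoly _ hdet l)
  have hcount : S.encard * (n - 3 : ℕ) ≤ (n + 1 : ℕ) :=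
    (Polynomial.encard_mul_le_natDegree_of_le_rootMultiplicity
      (Polynomial.discpoly_ne_zero hdet _) (by omega) hmult).trans
      (by exact_mod_cast Polynomial.natDegree_discpoly_le _ _)
  obtain ⟨s, hs⟩ := ENat.ne_top_iff_exists.mp fun htop : S.encard = ⊤ ↦ by
    rw [htop, ENat.top_mul (by norm_cast; omega)] at hcount
    exact ENat.natCast_ne_top _ (top_le_iff.mp hcount)
  rw [← hs] at hcount ⊢
  norm_cast at hcount ⊢
  refine ⟨?_, fun h2 ↦ by subst h2; omega⟩
  by_contra! h3
  have := Nat.mul_le_mul_right (n - 3) h3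
  omega

/-- Let `k` be a field of characteristic `0`, `n ≥ 6`, and `F`, `G`
quadratic forms in `n + 1` variables over `k` with `rank F = n + 1`.  Then
`{λ ∈ k̄ : rank(F + λG) ≤ 4}` has at most two elements, and if it has exactly two then
`n = 6` or `n = 7`. -/
theorem statement_18 (k : Type*) [Field k] [CharZero k] (n : ℕ) (hn : 6 ≤ n)
    (A B : Matrix (Fin (n + 1)) (Fin (n + 1)) k) (hAs : A.IsSymm) (hBs : B.IsSymm)
    (hF : A.rank = n + 1) :
    {l : AlgebraicClosure k |
        (bc (AlgebraicClosure k) A + l • bc (AlgebraicClosure k) B).rank ≤ 4}.encard ≤ 2 ∧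
      ({l : AlgebraicClosure k |
          (bc (AlgebraicClosure k) A + l • bc (AlgebraicClosure k) B).rank ≤ 4}.encard = 2 →
        n = 6 ∨ n = 7) :=
  statement_18_general k n hn A B hF
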